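/- Let ψ : [1,∞) → ℝ be positive, convex, differentiable with ψ'(t) < 0 for all t ≥ 1, and ψ(t) → 0 as t → ∞; set λ(t) = ψ(t)/|ψ'(t)| and α(t) = ψ(t)/(t·|ψ'(t)|). Assume α is nonincreasing with α(t) → 0 as t → ∞ and λ is nondecreasing with λ(t) → ∞ as t → ∞. Then lim_{n→∞} [ (1/n)·Σ_{k=1}^∞ k·ψ(k+n) ] / [ Σ_{k=n}^∞ ψ(k) ] = 0. -/

import Mathlib

open Filter Finset

/-!
For `t ≥ n` monotonicity of `α` gives `ψ t ≤ α(n) · t · |ψ' t|`, and convexity bounds `|ψ' t|` by the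
backward difference `ψ (t - 1) - ψ t`. Along `aₖ = ψ (n + k)` this is the recursive inequality
`aₖ₊₁ ≤ α(n) (n + k + 1) (aₖ - aₖ₊₁)`. Summing it by parts against the weights `n + k` shows that
`∑ aₖ` converges, and against the weights `k (n + k)`, whose increments are `n + 2k + 1`, that
`∑ k aₖ ≤ α(n) ((n + 1) ∑ aₖ + 2 ∑ k aₖ)`. Hence once `α(n) ≤ 1/4` the ratio in question is at most
`2 α(n) (n + 1) / n ≤ 4 α(n) → 0`.
-/

theorem sum_range_mul_sub_succ_le (c a : ℕ → ℝ) (hc : ∀ k, 0 ≤ c k) (ha : ∀ k, 0 ≤ a k)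
    (K : ℕ) :
    ∑ k ∈ range K, c (k + 1) * (a k - a (k + 1)) ≤
      c 0 * a 0 + ∑ k ∈ range K, (c (k + 1) - c k) * a k := by
  have hsplit : ∀ k, c (k + 1) * (a k - a (k + 1)) =
      (c (k + 1) - c k) * a k - (c (k + 1) * a (k + 1) - c k * a k) := fun k => by ring
  simp only [hsplit, sum_sub_distrib, sum_range_sub (fun k => c k * a k)]
  linarith [mul_nonneg (hc K) (ha K)]

theorem ConvexOn.apply_add_one_le_mul_sub {S : Set ℝ} {f : ℝ → ℝ} {x d c : ℝ}
    (hf : ConvexOn ℝ S f) (hx : x ∈ S) (hx' : x + 1 ∈ S) (hd : HasDerivAt f d (x + 1))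
    (hd_neg : d < 0) (hx_pos : 0 < x + 1) (hc : 0 ≤ c) (hle : f (x + 1) / ((x + 1) * |d|) ≤ c) :
    f (x + 1) ≤ c * (x + 1) * (f x - f (x + 1)) := by
  have hslope := hf.slope_le_of_hasDerivAt hx hx' (lt_add_one x) hd
  rw [slope_def_field, add_sub_cancel_left, div_one] at hslope
  rw [abs_of_neg hd_neg, div_le_iff₀ (mul_pos hx_pos (neg_pos.2 hd_neg))] at hle
  linarith [mul_le_mul_of_nonneg_left hslope (mul_nonneg hc hx_pos.le)]

section RecursiveBound

variable {a : ℕ → ℝ} {α m : ℝ}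

theorem summable_of_le_mul_sub (ha : ∀ k, 0 ≤ a k) (hα₀ : 0 ≤ α) (hα : α < 1) (hm : 0 ≤ m)
    (h : ∀ k : ℕ, a (k + 1) ≤ α * (m + (k + 1)) * (a k - a (k + 1))) : Summable a := by
  refine summable_of_sum_range_le ha (c := a 0 * (1 + α * m) / (1 - α)) fun K => ?_
  have habel := sum_range_mul_sub_succ_le (fun k => m + k) a (fun k => by positivity) ha K
  have hinc : ∀ k : ℕ, (m + ((k + 1 : ℕ) : ℝ) - (m + k)) * a k = a k := fun k => by push_cast; ring
  simp only [hinc, Nat.cast_zero, add_zero] at habel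
  have hstep : ∑ k ∈ range K, a (k + 1) ≤
      α * ∑ k ∈ range K, (m + ((k + 1 : ℕ) : ℝ)) * (a k - a (k + 1)) := by
    rw [mul_sum]
    exact sum_le_sum fun k _ => by push_cast; simpa only [mul_assoc] using h k
  have hshift : ∑ k ∈ range (K + 1), a k = a 0 + ∑ k ∈ range K, a (k + 1) := by
    rw [sum_range_succ', add_comm]
  have hmono : ∑ k ∈ range K, a k ≤ ∑ k ∈ range (K + 1), a k :=
    sum_le_sum_of_subset_of_nonneg (range_subset_range.2 K.le_succ) fun k _ _ => ha k
  rw [le_div_iff₀ (by linarith)]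
  linarith [mul_le_mul_of_nonneg_left habel hα₀, mul_le_mul_of_nonneg_left hmono hα₀]

theorem tsum_succ_mul_le (ha : ∀ k, 0 ≤ a k) (hα₀ : 0 ≤ α) (hα : α ≤ 1 / 4) (hm : 0 ≤ m)
    (h : ∀ k : ℕ, a (k + 1) ≤ α * (m + (k + 1)) * (a k - a (k + 1))) :
    ∑' k : ℕ, ((k : ℝ) + 1) * a (k + 1) ≤ 2 * α * (m + 1) * ∑' k, a k := by
  have hsum := summable_of_le_mul_sub ha hα₀ (by linarith) hm h
  refine Real.tsum_le_of_sum_range_le (fun k => mul_nonneg (by positivity) (ha _)) fun K => ?_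
  have habel := sum_range_mul_sub_succ_le (fun k => k * (m + k)) a
    (fun k => by positivity) ha K
  have hinc : ∀ k : ℕ, (((k + 1 : ℕ) : ℝ) * (m + ((k + 1 : ℕ) : ℝ)) - k * (m + k)) * a k =
      (m + 1) * a k + 2 * (k * a k) := fun k => by push_cast; ring
  simp only [hinc, Nat.cast_zero, zero_mul, zero_add, sum_add_distrib, ← mul_sum] at habel
  have hstep : ∑ k ∈ range K, ((k : ℝ) + 1) * a (k + 1) ≤
      α * ∑ k ∈ range K, (((k + 1 : ℕ) : ℝ) * (m + ((k + 1 : ℕ) : ℝ))) * (a k - a (k + 1)) := by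
    rw [mul_sum]
    refine sum_le_sum fun k _ => ?_
    push_cast
    have := mul_le_mul_of_nonneg_left (h k) (by positivity : (0 : ℝ) ≤ k + 1)
    linarith
  have hmoment : ∑ k ∈ range K, (k : ℝ) * a k ≤ ∑ k ∈ range K, ((k : ℝ) + 1) * a (k + 1) := by
    calc ∑ k ∈ range K, (k : ℝ) * a k ≤ ∑ k ∈ range (K + 1), (k : ℝ) * a k :=
          sum_le_sum_of_subset_of_nonneg (range_subset_range.2 K.le_succ)
            fun k _ _ => mul_nonneg k.cast_nonneg (ha k)
      _ = ∑ k ∈ range K, ((k : ℝ) + 1) * a (k + 1) := by simp [sum_range_succ']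
  have htail : ∑ k ∈ range K, a k ≤ ∑' k, a k := hsum.sum_le_tsum _ fun k _ => ha k
  have hT : 0 ≤ ∑ k ∈ range K, ((k : ℝ) + 1) * a (k + 1) :=
    sum_nonneg fun k _ => mul_nonneg (by positivity) (ha _)
  linarith [mul_le_mul_of_nonneg_left habel hα₀, mul_le_mul_of_nonneg_left hmoment hα₀,
    mul_le_mul_of_nonneg_right hα hT,
    mul_le_mul_of_nonneg_left htail (by positivity : 0 ≤ α * (m + 1))]

end RecursiveBound

theorem apply_add_succ_le_of_antitone_ratio (ψ ψ' : ℝ → ℝ)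
    (hconv : ConvexOn ℝ (Set.Ici (1 : ℝ)) ψ)
    (hderiv : ∀ t, 1 ≤ t → HasDerivAt ψ (ψ' t) t)
    (hneg : ∀ t, 1 ≤ t → ψ' t < 0)
    (halp_anti : ∀ s t, 1 ≤ s → s ≤ t → ψ t / (t * |ψ' t|) ≤ ψ s / (s * |ψ' s|))
    {n : ℕ} (hn : 1 ≤ n) (hα₀ : 0 ≤ ψ n / (n * |ψ' n|)) (k : ℕ) :
    ψ ((k + 1 + n : ℕ) : ℝ) ≤
      ψ n / (n * |ψ' n|) * (n + (k + 1)) * (ψ ((k + n : ℕ) : ℝ) - ψ ((k + 1 + n : ℕ) : ℝ)) := by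
  have hx : (1 : ℝ) ≤ ((k + n : ℕ) : ℝ) := by exact_mod_cast (by omega : 1 ≤ k + n)
  have hcast : ((k + 1 + n : ℕ) : ℝ) = ((k + n : ℕ) : ℝ) + 1 := by push_cast; ring
  have hcast' : (n : ℝ) + (k + 1) = ((k + n : ℕ) : ℝ) + 1 := by push_cast; ring
  rw [hcast, hcast']
  exact hconv.apply_add_one_le_mul_sub hx (by simp only [Set.mem_Ici]; linarith)
    (hderiv _ (by linarith)) (hneg _ (by linarith)) (by linarith) hα₀
    (halp_anti n _ (by exact_mod_cast hn) (by push_cast; linarith [k.cast_nonneg (α := ℝ)]))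

theorem limit_ratio_zero (ψ ψ' : ℝ → ℝ)
    (hpos : ∀ t, 1 ≤ t → 0 < ψ t)
    (hconv : ConvexOn ℝ (Set.Ici (1 : ℝ)) ψ)
    (hderiv : ∀ t, 1 ≤ t → HasDerivAt ψ (ψ' t) t)
    (hneg : ∀ t, 1 ≤ t → ψ' t < 0)
    (halp_anti : ∀ s t, 1 ≤ s → s ≤ t → ψ t / (t * |ψ' t|) ≤ ψ s / (s * |ψ' s|))
    (halp_lim : Filter.Tendsto (fun t => ψ t / (t * |ψ' t|)) Filter.atTop (nhds 0)) :
    Filter.Tendsto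
      (fun n : ℕ =>
        ((1 / (n : ℝ)) * ∑' k : ℕ, ((k : ℝ) + 1) * ψ ((k + 1 + n : ℕ) : ℝ)) /
          (∑' k : ℕ, ψ ((k + n : ℕ) : ℝ)))
      Filter.atTop (nhds 0) := by
  have hα_nat := halp_lim.comp tendsto_natCast_atTop_atTop
  have hψ_nonneg : ∀ n k : ℕ, 1 ≤ n → 0 ≤ ψ ((k + n : ℕ) : ℝ) := fun n k hn =>
    (hpos _ (by exact_mod_cast (by omega : 1 ≤ k + n))).le
  refine squeeze_zero' ?_ ?_ (by simpa using hα_nat.const_mul 4)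
  · filter_upwards [eventually_ge_atTop 1] with n hn
    exact div_nonneg (mul_nonneg (by positivity) (tsum_nonneg fun k =>
      mul_nonneg (by positivity) (hψ_nonneg n (k + 1) hn))) (tsum_nonneg fun k => hψ_nonneg n k hn)
  filter_upwards [eventually_ge_atTop 1,
    hα_nat.eventually (eventually_le_nhds (by norm_num : (0 : ℝ) < 1 / 4))] with n hn hαn
  simp only [Function.comp_apply] at hαn ⊢
  have hn' : (1 : ℝ) ≤ n := by exact_mod_cast hn
  set α := ψ n / (n * |ψ' n|)
  have hα₀ : 0 ≤ α := div_nonneg (hpos n hn').le (by positivity)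
  have hrec := apply_add_succ_le_of_antitone_ratio ψ ψ' hconv hderiv hneg halp_anti hn hα₀
  have hS := summable_of_le_mul_sub (hψ_nonneg n · hn) hα₀ (by linarith) n.cast_nonneg hrec
  have hT := tsum_succ_mul_le (hψ_nonneg n · hn) hα₀ hαn n.cast_nonneg hrec
  set S := ∑' k : ℕ, ψ ((k + n : ℕ) : ℝ)
  have hS_pos : 0 < S := hS.tsum_pos (hψ_nonneg n · hn) 0 (hpos _ (by simpa using hn'))
  rw [div_le_iff₀ hS_pos]
  calc 1 / (n : ℝ) * ∑' k : ℕ, ((k : ℝ) + 1) * ψ ((k + 1 + n : ℕ) : ℝ)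
      ≤ 1 / n * (2 * α * (n + 1) * S) := by gcongr
    _ = 2 * α * S + 2 * α * S / n := by field_simp
    _ ≤ 4 * α * S := by linarith [div_le_self (by positivity : 0 ≤ 2 * α * S) hn']
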